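/- arXiv:2111.03766 — 2 statements merged into one kernel-verified Lean document; each statement's English description precedes it below -/
import Mathlib

section
/- Fix A > 0, a wavenumber α > 0, and a Bond number B > 0. Set κ_α := √(α² + B) and λ*_α := (α²A/2)·(κ_α²/B)·[1 − tanh(κ_α)/κ_α]^{−1}. Then for every h ∈ M_A, the squared fundamental shallow sloshing frequency with surface tension satisfies λ_{α,1}(h) := Ω_{α,1}(h)² ≤ λ*_α. -/
/-- `h ∈ M_A`: continuous, nonnegative on `[-1,1]`, with `∫_{-1}^1 h = A`. -/
def MemMA (A : ℝ) (h : ℝ → ℝ) : Prop :=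
  ContinuousOn h (Set.Icc (-1 : ℝ) 1) ∧ (∀ x ∈ Set.Icc (-1 : ℝ) 1, 0 ≤ h x) ∧
    (∫ x in (-1 : ℝ)..1, h x) = A

/-- Admissible pairs `(ψ, ζ)` in `X_α`: `C¹` functions with `ζ(±1) = 0`, and
additionally `∫ ζ = 0` when `α = 0`. -/
def AdmissiblePair (α : ℝ) (ψ ζ : ℝ → ℝ) : Prop :=
  ContDiff ℝ 1 ψ ∧ ContDiff ℝ 1 ζ ∧ ζ (-1) = 0 ∧ ζ 1 = 0 ∧
    (α = 0 → (∫ x in (-1 : ℝ)..1, ζ x) = 0)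

/-- The energy `E_α(h; ψ, ζ)`. -/
noncomputable def energyC (B α : ℝ) (h ψ ζ : ℝ → ℝ) : ℝ :=
  (1 / 2) * (∫ x in (-1 : ℝ)..1, h x * ((deriv ψ x) ^ 2 + α ^ 2 * (ψ x) ^ 2)) +
    (1 / 2) * (∫ x in (-1 : ℝ)..1,
      ((1 + α ^ 2 / B) * (ζ x) ^ 2 + (1 / B) * (deriv ζ x) ^ 2))

/-- The fundamental shallow sloshing frequency
`Ω_{α,1}(h) = inf {E_α(h; ψ, ζ) : (ψ, ζ) ∈ X_α, G(ψ, ζ) = 1}`. -/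
noncomputable def Omega1 (B α : ℝ) (h : ℝ → ℝ) : ℝ :=
  sInf {E : ℝ | ∃ ψ ζ : ℝ → ℝ, AdmissiblePair α ψ ζ ∧
    (∫ x in (-1 : ℝ)..1, ψ x * ζ x) = 1 ∧ E = energyC B α h ψ ζ}

/-!
Test the variational problem with `ψ ≡ 1` and `ζ = 1 - cosh (κ x) / cosh κ`, `κ² = α² + B`.
The energy is the sum of a quadratic form `P/2` in `ψ` and one `Q/2` in `ζ`, while the constraint
is bilinear, so rescaling to `(a ψ, b ζ)` with `a b G(ψ, ζ) = 1` and balancing `a² P = b² Q`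
(AM–GM) gives `Ω ≤ √(P Q) / G`. For the test pair `P = α² A`, `Q = 2 κ² D / B` and `G = 2 D`
with `D = 1 - tanh κ / κ > 0`, hence `Ω² ≤ α² A κ² / (2 B D) = λ*`.
-/

open Real intervalIntegral

theorem Real.tanh_lt_self {x : ℝ} (hx : 0 < x) : tanh x < x := by
  obtain ⟨c, hc, hslope⟩ := exists_hasDerivAt_eq_slope sinh cosh hx
    continuous_sinh.continuousOn (fun y _ => hasDerivAt_sinh y)
  have hcosh : cosh c < cosh x := by
    rw [cosh_lt_cosh, abs_of_pos hc.1, abs_of_pos hx]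
    exact hc.2
  have hsinh : sinh x = cosh c * x := by
    rw [hslope, sinh_zero, sub_zero, sub_zero, div_mul_cancel₀ _ hx.ne']
  rw [tanh_eq_sinh_div_cosh, div_lt_iff₀ (cosh_pos x), hsinh]
  nlinarith

theorem integral_cosh_mul {m : ℝ} (hm : m ≠ 0) :
    ∫ x in (-1 : ℝ)..1, cosh (m * x) = 2 * sinh m / m := by
  rw [integral_comp_mul_left (fun y => cosh y) hm,
    integral_eq_sub_of_hasDerivAt (fun y _ => hasDerivAt_sinh y)
      (continuous_cosh.intervalIntegrable _ _)]
  rw [mul_one, mul_neg_one, sinh_neg, smul_eq_mul]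
  ring

/-- For constant `ψ` this is, up to a factor, the minimiser in `ζ` of the energy: it solves
`κ² ζ - ζ'' = κ²` with `ζ(±1) = 0`, where `κ² = α² + B`. -/
noncomputable def sloshingProfile (κ x : ℝ) : ℝ :=
  1 - cosh (κ * x) / cosh κ

section sloshingProfile

variable {κ : ℝ}

theorem hasDerivAt_sloshingProfile (κ x : ℝ) :
    HasDerivAt (sloshingProfile κ) (-(κ * sinh (κ * x) / cosh κ)) x := by
  have hcosh : HasDerivAt (fun y => cosh (κ * y)) (sinh (κ * x) * κ) x :=
    (hasDerivAt_const_mul κ).cosh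
  exact ((hcosh.div_const (cosh κ)).const_sub 1).congr_deriv (by ring)

theorem contDiff_sloshingProfile (κ : ℝ) : ContDiff ℝ 1 (sloshingProfile κ) := by
  unfold sloshingProfile
  fun_prop

theorem sloshingProfile_neg_one (κ : ℝ) : sloshingProfile κ (-1) = 0 := by
  simp [sloshingProfile, (cosh_pos κ).ne']

theorem sloshingProfile_one (κ : ℝ) : sloshingProfile κ 1 = 0 := by
  simp [sloshingProfile, (cosh_pos κ).ne']

theorem integral_sloshingProfile (hκ : κ ≠ 0) :
    ∫ x in (-1 : ℝ)..1, sloshingProfile κ x = 2 * (1 - tanh κ / κ) := by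
  have hcosh : Continuous fun x => cosh (κ * x) / cosh κ := by fun_prop
  simp only [sloshingProfile]
  rw [integral_sub intervalIntegrable_const (hcosh.intervalIntegrable _ _), integral_div,
    integral_cosh_mul hκ, integral_const, smul_eq_mul, tanh_eq_sinh_div_cosh]
  field_simp
  ring

theorem integral_sq_sloshingProfile_add_sq_deriv (hκ : κ ≠ 0) :
    ∫ x in (-1 : ℝ)..1, (κ ^ 2 * sloshingProfile κ x ^ 2 + deriv (sloshingProfile κ) x ^ 2) =
      2 * κ ^ 2 * (1 - tanh κ / κ) := by
  have hC := (cosh_pos κ).ne'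
  -- `cosh² + sinh² = cosh (2·)` makes the integrand linear in hyperbolic cosines.
  have hintegrand : ∀ x, κ ^ 2 * sloshingProfile κ x ^ 2 + deriv (sloshingProfile κ) x ^ 2 =
      κ ^ 2 - 2 * κ ^ 2 / cosh κ * cosh (κ * x) + κ ^ 2 / cosh κ ^ 2 * cosh (2 * κ * x) := by
    intro x
    rw [(hasDerivAt_sloshingProfile κ x).deriv, sloshingProfile, mul_assoc, cosh_two_mul]
    field_simp
    ring
  have h1 : Continuous fun x => 2 * κ ^ 2 / cosh κ * cosh (κ * x) := by fun_prop
  have h2 : Continuous fun x => κ ^ 2 / cosh κ ^ 2 * cosh (2 * κ * x) := by fun_prop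
  simp only [hintegrand]
  rw [integral_add (intervalIntegrable_const.sub (h1.intervalIntegrable _ _))
      (h2.intervalIntegrable _ _),
    integral_sub intervalIntegrable_const (h1.intervalIntegrable _ _), integral_const,
    integral_const_mul, integral_const_mul, integral_cosh_mul hκ,
    integral_cosh_mul (mul_ne_zero two_ne_zero hκ), sinh_two_mul, tanh_eq_sinh_div_cosh]
  field_simp
  ring

theorem integral_energy_sloshingProfile {α B : ℝ} (hB : B ≠ 0) (hκ : κ ^ 2 = α ^ 2 + B)
    (hκ₀ : κ ≠ 0) :
    ∫ x in (-1 : ℝ)..1, ((1 + α ^ 2 / B) * sloshingProfile κ x ^ 2 +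
      (1 / B) * deriv (sloshingProfile κ) x ^ 2) = κ ^ 2 / B * (2 * (1 - tanh κ / κ)) := by
  have hcoeff : ∀ x, (1 + α ^ 2 / B) * sloshingProfile κ x ^ 2 +
      (1 / B) * deriv (sloshingProfile κ) x ^ 2 =
      1 / B * (κ ^ 2 * sloshingProfile κ x ^ 2 + deriv (sloshingProfile κ) x ^ 2) := by
    intro x
    rw [hκ]
    field_simp
    ring
  simp only [hcoeff, integral_const_mul, integral_sq_sloshingProfile_add_sq_deriv hκ₀]
  ring

end sloshingProfile

section Energy

variable {B α : ℝ} {h ψ ζ : ℝ → ℝ}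

theorem AdmissiblePair.const_mul (hadm : AdmissiblePair α ψ ζ) (a b : ℝ) :
    AdmissiblePair α (fun x => a * ψ x) (fun x => b * ζ x) := by
  obtain ⟨hψ, hζ, hζ₀, hζ₁, hmean⟩ := hadm
  refine ⟨contDiff_const.mul hψ, contDiff_const.mul hζ, by simp [hζ₀], by simp [hζ₁], ?_⟩
  intro hα
  simp [integral_const_mul, hmean hα]

theorem energyC_const_mul (a b : ℝ) :
    energyC B α h (fun x => a * ψ x) (fun x => b * ζ x) =
      a ^ 2 * ((1 / 2) * ∫ x in (-1 : ℝ)..1, h x * ((deriv ψ x) ^ 2 + α ^ 2 * (ψ x) ^ 2)) +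
      b ^ 2 * ((1 / 2) * ∫ x in (-1 : ℝ)..1,
        ((1 + α ^ 2 / B) * (ζ x) ^ 2 + (1 / B) * (deriv ζ x) ^ 2)) := by
  have hψ : ∀ x, h x * ((a * deriv ψ x) ^ 2 + α ^ 2 * (a * ψ x) ^ 2) =
      a ^ 2 * (h x * ((deriv ψ x) ^ 2 + α ^ 2 * (ψ x) ^ 2)) := fun x => by ring
  have hζ : ∀ x, (1 + α ^ 2 / B) * (b * ζ x) ^ 2 + 1 / B * (b * deriv ζ x) ^ 2 =
      b ^ 2 * ((1 + α ^ 2 / B) * (ζ x) ^ 2 + (1 / B) * (deriv ζ x) ^ 2) := fun x => by ring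
  simp only [energyC, deriv_const_mul_field', hψ, hζ, integral_const_mul]
  ring

theorem energyC_nonneg (hB : 0 ≤ B) (hh : ∀ x ∈ Set.Icc (-1 : ℝ) 1, 0 ≤ h x) :
    0 ≤ energyC B α h ψ ζ := by
  have hψ : 0 ≤ ∫ x in (-1 : ℝ)..1, h x * ((deriv ψ x) ^ 2 + α ^ 2 * (ψ x) ^ 2) :=
    integral_nonneg (by norm_num) fun x hx => mul_nonneg (hh x hx) (by positivity)
  have hζ : 0 ≤ ∫ x in (-1 : ℝ)..1,
      ((1 + α ^ 2 / B) * (ζ x) ^ 2 + (1 / B) * (deriv ζ x) ^ 2) :=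
    integral_nonneg (by norm_num) fun x _ => by positivity
  unfold energyC
  positivity

theorem Omega1_nonneg (hB : 0 ≤ B) (hh : ∀ x ∈ Set.Icc (-1 : ℝ) 1, 0 ≤ h x) :
    0 ≤ Omega1 B α h :=
  Real.sInf_nonneg (by rintro E ⟨ψ, ζ, -, -, rfl⟩; exact energyC_nonneg hB hh)

theorem Omega1_le_energyC (hB : 0 ≤ B) (hh : ∀ x ∈ Set.Icc (-1 : ℝ) 1, 0 ≤ h x)
    (hadm : AdmissiblePair α ψ ζ) (hG : ∫ x in (-1 : ℝ)..1, ψ x * ζ x = 1) :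
    Omega1 B α h ≤ energyC B α h ψ ζ :=
  csInf_le ⟨0, by rintro E ⟨ψ, ζ, -, -, rfl⟩; exact energyC_nonneg hB hh⟩ ⟨ψ, ζ, hadm, hG, rfl⟩

theorem Omega1_sq_le_of_admissiblePair (hB : 0 ≤ B) (hh : ∀ x ∈ Set.Icc (-1 : ℝ) 1, 0 ≤ h x)
    (hadm : AdmissiblePair α ψ ζ) {g P Q : ℝ} (hg : 0 < g) (hP : 0 < P) (hQ : 0 < Q)
    (hG : ∫ x in (-1 : ℝ)..1, ψ x * ζ x = g)
    (hPdef : ∫ x in (-1 : ℝ)..1, h x * ((deriv ψ x) ^ 2 + α ^ 2 * (ψ x) ^ 2) = P)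
    (hQdef : ∫ x in (-1 : ℝ)..1,
      ((1 + α ^ 2 / B) * (ζ x) ^ 2 + (1 / B) * (deriv ζ x) ^ 2) = Q) :
    Omega1 B α h ^ 2 ≤ P * Q / g ^ 2 := by
  set s := √(P * Q) / g
  have hs : 0 < s := by positivity
  have ha : √(s / P) ^ 2 = s / P := sq_sqrt (by positivity)
  have hb : √(s / Q) ^ 2 = s / Q := sq_sqrt (by positivity)
  have hPQ : √(P * Q) ^ 2 = P * Q := sq_sqrt (by positivity)
  have hab : √(s / P) * √(s / Q) * g = 1 := by
    rw [← sqrt_mul (by positivity), div_mul_div_comm, ← sq, sqrt_div' _ (by positivity),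
      sqrt_sq hs.le]
    field_simp
    exact div_mul_cancel₀ _ hg.ne'
  have hGab : ∫ x in (-1 : ℝ)..1, √(s / P) * ψ x * (√(s / Q) * ζ x) = 1 := by
    have hrearrange : ∀ x,
        √(s / P) * ψ x * (√(s / Q) * ζ x) = √(s / P) * √(s / Q) * (ψ x * ζ x) := fun x => by ring
    simp only [hrearrange, integral_const_mul, hG, hab]
  have hE :=
    energyC_const_mul (B := B) (α := α) (h := h) (ψ := ψ) (ζ := ζ) (√(s / P)) (√(s / Q))
  rw [ha, hb, hPdef, hQdef] at hE
  have hle := Omega1_le_energyC hB hh (hadm.const_mul _ _) hGab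
  rw [hE] at hle
  calc Omega1 B α h ^ 2 ≤ s ^ 2 := by
        gcongr
        · exact Omega1_nonneg hB hh
        · field_simp at hle ⊢; linarith
    _ = P * Q / g ^ 2 := by rw [div_pow, hPQ]

end Energy

theorem isoperimetric_surface_tension_alpha_pos (A α B : ℝ) (hA : 0 < A)
    (hα : 0 < α) (hB : 0 < B)
    (κα : ℝ) (hκ : κα = Real.sqrt (α ^ 2 + B))
    (lamα : ℝ)
    (hlam : lamα = (α ^ 2 * A / 2) * (κα ^ 2 / B) * (1 - Real.tanh κα / κα)⁻¹) :
    ∀ h : ℝ → ℝ, MemMA A h → (Omega1 B α h) ^ 2 ≤ lamα := by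
  rintro h ⟨-, hh, hmass⟩
  have hκ_pos : 0 < κα := hκ ▸ sqrt_pos.mpr (by positivity)
  have hκ_sq : κα ^ 2 = α ^ 2 + B := hκ ▸ sq_sqrt (by positivity)
  set D := 1 - tanh κα / κα
  have hD : 0 < D := sub_pos.mpr ((div_lt_one hκ_pos).mpr (tanh_lt_self hκ_pos))
  have hadm : AdmissiblePair α (fun _ => 1) (sloshingProfile κα) :=
    ⟨contDiff_const, contDiff_sloshingProfile κα, sloshingProfile_neg_one κα,
      sloshingProfile_one κα, fun hα₀ => absurd hα₀ hα.ne'⟩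
  have hG : ∫ x in (-1 : ℝ)..1, 1 * sloshingProfile κα x = 2 * D := by
    simpa using integral_sloshingProfile hκ_pos.ne'
  have hP : ∫ x in (-1 : ℝ)..1, h x * ((deriv (fun _ => (1 : ℝ)) x) ^ 2 + α ^ 2 * 1 ^ 2) =
      α ^ 2 * A := by
    simp [integral_mul_const, hmass, mul_comm]
  calc Omega1 B α h ^ 2 ≤ α ^ 2 * A * (κα ^ 2 / B * (2 * D)) / (2 * D) ^ 2 :=
        Omega1_sq_le_of_admissiblePair hB.le hh hadm (by positivity) (by positivity)
          (by positivity) hG hP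
          (integral_energy_sloshingProfile hB.ne' hκ_sq hκ_pos.ne')
    _ = lamα := by
        rw [hlam]
        field_simp
end

section
/- Fix A > 0, a wavenumber α > 0, and a Bond number B > 0. Set κ_α := √(α² + B), λ*_α := (α²A/2)·(κ_α²/B)·[1 − tanh(κ_α)/κ_α]^{−1}, and define h_α*(x) := (λ*_α·B/(α²κ_α²))·[1 − cosh(κ_α x)/cosh(κ_α)] for x ∈ [−1,1]. Then: h_α* is even, h_α*(±1) = 0, h_α*(x) > 0 for all x ∈ (−1,1), h_α* is strictly decreasing on (0,1), ∫_{−1}^{1} h_α*(x) dx = A (so h_α* ∈ M_A), and the function −h_α* is convex on [−1,1]. -/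
/-!
Up to the constant factor `λ*_α B / (α² κ_α²) = (A / 2) (1 - tanh κ_α / κ_α)⁻¹`, the shape `h_α*` is the
profile `1 - cosh (κ x) / cosh κ`, which inherits evenness, vanishing at `±1`, positivity and monotonicity
from `cosh` and concavity from the convexity of `cosh`. Its integral over `[-1, 1]` is
`2 (1 - tanh κ / κ)`, which is positive because `tanh κ < κ`, and is exactly cancelled by the factor.
-/

open Real Set

namespace Real

theorem sinh_lt_mul_cosh {x : ℝ} (hx : 0 < x) : sinh x < x * cosh x := by
  -- mean value theorem: `sinh x = x cosh c` for some `0 < c < x`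
  obtain ⟨c, ⟨hc0, hcx⟩, hslope⟩ :=
    exists_hasDerivAt_eq_slope sinh cosh hx continuous_sinh.continuousOn
      fun y _ => hasDerivAt_sinh y
  rw [sinh_zero, sub_zero, sub_zero, eq_div_iff hx.ne'] at hslope
  rw [← hslope, mul_comm]
  exact mul_lt_mul_of_pos_left (cosh_lt_cosh.2 (by rwa [abs_of_pos hc0, abs_of_pos hx])) hx

theorem tanh_lt_self_s4 {x : ℝ} (hx : 0 < x) : tanh x < x := by
  rw [tanh_eq_sinh_div_cosh, div_lt_iff₀ (cosh_pos x)]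
  exact sinh_lt_mul_cosh hx

theorem convexOn_cosh : ConvexOn ℝ univ cosh :=
  convexOn_univ_of_deriv2_nonneg differentiable_cosh
    (by rw [deriv_cosh]; exact differentiable_sinh)
    fun x => by simp [deriv_cosh, deriv_sinh, (cosh_pos x).le]

theorem integral_cosh (a b : ℝ) : ∫ x in a..b, cosh x = sinh b - sinh a :=
  intervalIntegral.integral_eq_sub_of_hasDerivAt (fun x _ => hasDerivAt_sinh x)
    (continuous_cosh.intervalIntegrable _ _)

end Real

noncomputable def coshProfile (κ x : ℝ) : ℝ := 1 - cosh (κ * x) / cosh κ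

section coshProfile

variable {κ : ℝ}

theorem coshProfile_neg (κ x : ℝ) : coshProfile κ (-x) = coshProfile κ x := by
  simp [coshProfile]

theorem coshProfile_one (κ : ℝ) : coshProfile κ 1 = 0 := by
  simp [coshProfile, (cosh_pos κ).ne']

theorem coshProfile_neg_one (κ : ℝ) : coshProfile κ (-1) = 0 := by
  rw [coshProfile_neg, coshProfile_one]

theorem coshProfile_pos (hκ : κ ≠ 0) {x : ℝ} (hx : x ∈ Ioo (-1) 1) : 0 < coshProfile κ x := by
  have hx' : |x| < 1 := abs_lt.2 hx
  rw [coshProfile, sub_pos, div_lt_one (cosh_pos κ), cosh_lt_cosh, abs_mul]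
  exact mul_lt_of_lt_one_right (abs_pos.2 hκ) hx'

theorem strictAntiOn_coshProfile (hκ : κ ≠ 0) : StrictAntiOn (coshProfile κ) (Ici 0) := by
  intro x hx y hy hxy
  rw [mem_Ici] at hx hy
  have hcosh : cosh (κ * x) < cosh (κ * y) := by
    rw [cosh_lt_cosh, abs_mul, abs_mul, abs_of_nonneg hx, abs_of_nonneg hy]
    exact mul_lt_mul_of_pos_left hxy (abs_pos.2 hκ)
  unfold coshProfile
  gcongr

theorem integral_coshProfile (hκ : κ ≠ 0) :
    ∫ x in (-1 : ℝ)..1, coshProfile κ x = 2 * (1 - tanh κ / κ) := by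
  have hcosh : ∫ x in (-1 : ℝ)..1, cosh (κ * x) = 2 * sinh κ / κ := by
    rw [intervalIntegral.integral_comp_mul_left _ hκ, integral_cosh, mul_neg_one, mul_one,
      sinh_neg, smul_eq_mul]
    field_simp
    ring
  have hint : IntervalIntegrable (fun x => cosh (κ * x) / cosh κ) MeasureTheory.volume (-1) 1 :=
    (by fun_prop : Continuous fun x => cosh (κ * x) / cosh κ).intervalIntegrable _ _
  unfold coshProfile
  rw [intervalIntegral.integral_sub intervalIntegrable_const hint,
    intervalIntegral.integral_div, hcosh, intervalIntegral.integral_const, tanh_eq_sinh_div_cosh]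
  field_simp
  ring

theorem convexOn_neg_coshProfile (κ : ℝ) : ConvexOn ℝ univ fun x => -coshProfile κ x := by
  have hcomp : ConvexOn ℝ univ fun x => cosh (κ * x) :=
    convexOn_cosh.comp_linearMap (LinearMap.mulLeft ℝ κ)
  refine ((hcomp.smul (inv_pos.2 (cosh_pos κ)).le).add_const (-1)).congr fun x _ => ?_
  simp only [coshProfile, Pi.add_apply, smul_eq_mul]
  ring

end coshProfile

theorem optimal_shape_alpha_pos (A α B : ℝ) (hA : 0 < A) (hα : 0 < α) (hB : 0 < B)
    (κα : ℝ) (hκ : κα = Real.sqrt (α ^ 2 + B))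
    (lamα : ℝ)
    (hlam : lamα = (α ^ 2 * A / 2) * (κα ^ 2 / B) * (1 - Real.tanh κα / κα)⁻¹)
    (hα' : ℝ → ℝ)
    (hhα : ∀ x : ℝ, hα' x = lamα * B / (α ^ 2 * κα ^ 2) *
      (1 - Real.cosh (κα * x) / Real.cosh κα)) :
    (∀ x : ℝ, hα' (-x) = hα' x) ∧
    hα' (-1) = 0 ∧ hα' 1 = 0 ∧
    (∀ x ∈ Set.Ioo (-1 : ℝ) 1, 0 < hα' x) ∧
    StrictAntiOn hα' (Set.Ioo 0 1) ∧
    (∫ x in (-1 : ℝ)..1, hα' x) = A ∧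
    ConvexOn ℝ (Set.Icc (-1 : ℝ) 1) (fun x => -hα' x) := by
  have hκpos : 0 < κα := hκ ▸ sqrt_pos.2 (by positivity)
  have hgap : 0 < κα - tanh κα := sub_pos.2 (tanh_lt_self_s4 hκpos)
  have hD : 0 < 1 - tanh κα / κα := by
    rw [one_sub_div hκpos.ne']
    positivity
  set C := A / 2 * (1 - tanh κα / κα)⁻¹ with hC
  have hCpos : 0 < C := by positivity
  have hshape : hα' = fun x => C * coshProfile κα x := by
    ext x
    rw [hhα, hlam, hC, coshProfile]
    field_simp [hgap.ne']
  subst hshape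
  beta_reduce
  refine ⟨fun x => by rw [coshProfile_neg], by rw [coshProfile_neg_one, mul_zero],
    by rw [coshProfile_one, mul_zero], fun x hx => mul_pos hCpos (coshProfile_pos hκpos.ne' hx),
    fun x hx y hy hxy => mul_lt_mul_of_pos_left (strictAntiOn_coshProfile hκpos.ne'
      (le_of_lt hx.1) (le_of_lt hy.1) hxy) hCpos, ?_, ?_⟩
  · rw [intervalIntegral.integral_const_mul, integral_coshProfile hκpos.ne', hC]
    field_simp
  · refine (((convexOn_neg_coshProfile κα).smul hCpos.le).subset (subset_univ _)
      (convex_Icc _ _)).congr fun x _ => ?_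
    simp only [smul_eq_mul]
    ring
end
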